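/- Let A be a set of m alternatives, N = {1,…,n} a set of agents each with a linear preference order over A, and α an m-candidate positional scoring function. For all capacity functions s, t : A → ℕ with s(a') ≤ t(a') for every alternative a', and for every alternative a, it holds that z_N(s ∪ {a}) − z_N(s) ≥ z_N(t ∪ {a}) − z_N(t) (equivalently, z_N(s ∪ {a}) + z_N(t) ≥ z_N(t ∪ {a}) + z_N(s)), where s ∪ {a} denotes the capacity function obtained from s by increasing the capacity of a by one. That is, the optimal-satisfaction function z_N is submodular over capacity functions. -/

import Mathlib

open Finset

/-- Total α-satisfaction of the agents in `N'` under a partial assignment `Φ`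
(agents assigned `none` (⊥) contribute 0). Agent `i`'s ranking is the
bijection `pos i` from alternatives to positions (position `0` = most preferred). -/
def satisf {m n : ℕ} (α : Fin m → ℕ) (pos : Fin n → Fin m ≃ Fin m)
    (N' : Finset (Fin n)) (Φ : Fin n → Option (Fin m)) : ℕ :=
  ∑ i ∈ N', Option.elim (Φ i) 0 (fun a => α (pos i a))

/-- A partial assignment `Φ` is feasible for a capacity function `s` if each
alternative `a` represents at most `s a` agents. -/
def feasible {m n : ℕ} (s : Fin m → ℕ) (Φ : Fin n → Option (Fin m)) : Prop :=
  ∀ a : Fin m, (univ.filter (fun i => Φ i = some a)).card ≤ s a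

instance {m n : ℕ} (s : Fin m → ℕ) : DecidablePred (feasible (n := n) s) := by
  unfold feasible; infer_instance

/-- `zval α pos N' s` is `z_{N'}(s)`: the maximum, over partial assignments `Φ`
feasible for the capacity function `s`, of the total satisfaction of agents in `N'`. -/
def zval {m n : ℕ} (α : Fin m → ℕ) (pos : Fin n → Fin m ≃ Fin m)
    (N' : Finset (Fin n)) (s : Fin m → ℕ) : ℕ :=
  (univ.filter (fun Φ : Fin n → Option (Fin m) => feasible s Φ)).sup (satisf α pos N')

/-- The capacity function `s_S` associated to a set `S` of alternatives:
capacity `⌈n/K⌉` on members of `S` and `0` elsewhere. -/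
def capOf {m : ℕ} (K n : ℕ) (S : Finset (Fin m)) : Fin m → ℕ :=
  fun a => if a ∈ S then (n + K - 1) / K else 0

namespace ZSubAux

variable {m n : ℕ}

/-- Number of agents in `R` assigned to alternative `x` by `f`. -/
def cnt {m n : ℕ} (R : Finset (Fin n)) (f : Fin n → Option (Fin m)) (x : Fin m) : ℕ :=
  (R.filter (fun i => f i = some x)).card

lemma cnt_congr {R : Finset (Fin n)} {f g : Fin n → Option (Fin m)}
    (h : ∀ i ∈ R, f i = g i) (x : Fin m) : cnt R f x = cnt R g x := by
  unfold cnt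
  congr 1
  apply Finset.filter_congr
  intro i hi
  rw [h i hi]

lemma cnt_erase {R : Finset (Fin n)} {i : Fin n} (hi : i ∈ R)
    (f : Fin n → Option (Fin m)) (x : Fin m) :
    cnt R f x = cnt (R.erase i) f x + (if f i = some x then 1 else 0) := by
  unfold cnt
  conv_lhs => rw [← Finset.insert_erase hi]
  rw [Finset.filter_insert]
  split_ifs with h
  · rw [Finset.card_insert_of_notMem (fun hc => (Finset.mem_erase.mp (Finset.mem_filter.mp hc).1).1 rfl)]
  · simp

lemma cnt_pos {R : Finset (Fin n)} {f : Fin n → Option (Fin m)} {x : Fin m}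
    {i : Fin n} (hi : i ∈ R) (hfi : f i = some x) : 1 ≤ cnt R f x := by
  unfold cnt
  rw [Nat.succ_le_iff, Finset.card_pos]
  exact ⟨i, Finset.mem_filter.mpr ⟨hi, hfi⟩⟩

/-- Key exchange lemma: if `Φ` is feasible for `p₀`, `Ψ` is feasible for both `p` and `q`,
and `p₀ + q₀ = p + q` (we only use the inequality forms below), then some subset `S` of
agents can have their two assignments swapped so that the resulting pair of assignments is
feasible for `p` and `q` respectively. -/
lemma key (Φ Ψ : Fin n → Option (Fin m)) (R : Finset (Fin n)) :
    ∀ (p q : Fin m → ℕ),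
      (∀ x, cnt R Ψ x ≤ p x) → (∀ x, cnt R Ψ x ≤ q x) →
      (∀ x, cnt R Φ x + cnt R Ψ x ≤ p x + q x) →
      ∃ S ⊆ R,
        (∀ x, cnt R (fun i => if i ∈ S then Ψ i else Φ i) x ≤ p x) ∧
        (∀ x, cnt R (fun i => if i ∈ S then Φ i else Ψ i) x ≤ q x) := by
  induction R using Finset.strongInduction with
  | _ R IH =>
    intro p q h1 h2 h3
    by_cases hB : ∀ i ∈ R, ∀ x, Φ i = some x → p x ≤ cnt R Ψ x ∧ q x ≤ cnt R Ψ x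
    · -- swap everyone
      refine ⟨R, Finset.Subset.refl R, ?_, ?_⟩
      · intro x
        rw [cnt_congr (g := Ψ) (fun i hi => if_pos hi)]
        exact h1 x
      · intro x
        rw [cnt_congr (g := Φ) (fun i hi => if_pos hi)]
        by_cases hx : cnt R Φ x = 0
        · omega
        · obtain ⟨i, hif⟩ := Finset.card_pos.mp (Nat.pos_of_ne_zero hx)
          obtain ⟨hi, hΦi⟩ := Finset.mem_filter.mp hif
          have := hB i hi x hΦi
          have h3x := h3 x
          omega
    · push_neg at hB
      obtain ⟨i, hi, x₀, hΦi, hlt⟩ := hB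
      have hR' : R.erase i ⊂ R := Finset.erase_ssubset hi
      have hlt' : cnt R Ψ x₀ < p x₀ ∨ cnt R Ψ x₀ < q x₀ := by
        by_cases h : cnt R Ψ x₀ < p x₀
        · exact Or.inl h
        · exact Or.inr (hlt (by omega))
      have hsafeΨp : ∀ x, Ψ i = some x → 1 ≤ p x := fun x hx =>
        le_trans (cnt_pos hi hx) (h1 x)
      have hsafeΨq : ∀ x, Ψ i = some x → 1 ≤ q x := fun x hx =>
        le_trans (cnt_pos hi hx) (h2 x)
      rcases hlt' with hlt | hlt
      · -- keep orientation for agent i (`cnt R Ψ x₀ < p x₀`)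
        obtain ⟨S, hS, hp, hq⟩ := IH (R.erase i) hR'
          (fun x => p x - (if Φ i = some x then 1 else 0))
          (fun x => q x - (if Ψ i = some x then 1 else 0))
          (by
            intro x
            have eΨ := cnt_erase hi Ψ x
            have h1x := h1 x
            by_cases hpx : Φ i = some x
            · obtain rfl : x₀ = x := Option.some_injective _ (hΦi.symm.trans hpx)
              rw [if_pos hpx]
              split_ifs at eΨ <;> omega
            · rw [if_neg hpx]
              split_ifs at eΨ <;> omega)
          (by
            intro x
            have eΨ := cnt_erase hi Ψ x
            have h2x := h2 x
            split_ifs at eΨ ⊢ <;> omega)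
          (by
            intro x
            have eΨ := cnt_erase hi Ψ x
            have eΦ := cnt_erase hi Φ x
            have h3x := h3 x
            have sq := hsafeΨq x
            by_cases hpx : Φ i = some x
            · obtain rfl : x₀ = x := Option.some_injective _ (hΦi.symm.trans hpx)
              rw [if_pos hpx]
              rw [if_pos hpx] at eΦ
              split_ifs at eΨ ⊢ with h
              · have := sq h; omega
              · omega
            · rw [if_neg hpx]
              rw [if_neg hpx] at eΦ
              split_ifs at eΨ ⊢ with h
              · have := sq h; omega
              · omega)
        have hiS : i ∉ S := fun h => (Finset.mem_erase.mp (hS h)).1 rfl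
        refine ⟨S, fun j hj => Finset.mem_of_mem_erase (hS hj), ?_, ?_⟩
        · intro x
          have e := cnt_erase hi (fun j => if j ∈ S then Ψ j else Φ j) x
          simp only [hiS, if_false] at e
          have hIH := hp x
          by_cases hpx : Φ i = some x
          · obtain rfl : x₀ = x := Option.some_injective _ (hΦi.symm.trans hpx)
            rw [if_pos hpx] at e hIH
            omega
          · rw [if_neg hpx] at e hIH
            omega
        · intro x
          have e := cnt_erase hi (fun j => if j ∈ S then Φ j else Ψ j) x
          simp only [hiS, if_false] at e
          have hIH := hq x
          have sq := hsafeΨq x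
          split_ifs at e hIH ⊢ with h
          · have := sq h; omega
          · omega
      · -- swap orientation for agent i (`cnt R Ψ x₀ < q x₀`)
        obtain ⟨S, hS, hp, hq⟩ := IH (R.erase i) hR'
          (fun x => p x - (if Ψ i = some x then 1 else 0))
          (fun x => q x - (if Φ i = some x then 1 else 0))
          (by
            intro x
            have eΨ := cnt_erase hi Ψ x
            have h1x := h1 x
            split_ifs at eΨ ⊢ <;> omega)
          (by
            intro x
            have eΨ := cnt_erase hi Ψ x
            have h2x := h2 x
            by_cases hpx : Φ i = some x
            · obtain rfl : x₀ = x := Option.some_injective _ (hΦi.symm.trans hpx)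
              rw [if_pos hpx]
              split_ifs at eΨ <;> omega
            · rw [if_neg hpx]
              split_ifs at eΨ <;> omega)
          (by
            intro x
            have eΨ := cnt_erase hi Ψ x
            have eΦ := cnt_erase hi Φ x
            have h3x := h3 x
            have sp := hsafeΨp x
            by_cases hpx : Φ i = some x
            · obtain rfl : x₀ = x := Option.some_injective _ (hΦi.symm.trans hpx)
              rw [if_pos hpx]
              rw [if_pos hpx] at eΦ
              split_ifs at eΨ ⊢ with h
              · have := sp h; omega
              · omega
            · rw [if_neg hpx]
              rw [if_neg hpx] at eΦ
              split_ifs at eΨ ⊢ with h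
              · have := sp h; omega
              · omega)
        have hiS : i ∉ S := fun h => (Finset.mem_erase.mp (hS h)).1 rfl
        refine ⟨insert i S, ?_, ?_, ?_⟩
        · intro j hj
          rcases Finset.mem_insert.mp hj with rfl | hj
          · exact hi
          · exact Finset.mem_of_mem_erase (hS hj)
        · intro x
          have e := cnt_erase hi (fun j => if j ∈ insert i S then Ψ j else Φ j) x
          simp only [Finset.mem_insert_self, if_true] at e
          have ecg : cnt (R.erase i) (fun j => if j ∈ insert i S then Ψ j else Φ j) x
              = cnt (R.erase i) (fun j => if j ∈ S then Ψ j else Φ j) x := by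
            apply cnt_congr
            intro j hj
            have hji : j ≠ i := (Finset.mem_erase.mp hj).1
            by_cases hjS : j ∈ S <;> simp [hjS, Finset.mem_insert, hji]
          rw [ecg] at e
          have hIH := hp x
          have sp := hsafeΨp x
          split_ifs at e hIH ⊢ with h
          · have := sp h; omega
          · omega
        · intro x
          have e := cnt_erase hi (fun j => if j ∈ insert i S then Φ j else Ψ j) x
          simp only [Finset.mem_insert_self, if_true] at e
          have ecg : cnt (R.erase i) (fun j => if j ∈ insert i S then Φ j else Ψ j) x
              = cnt (R.erase i) (fun j => if j ∈ S then Φ j else Ψ j) x := by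
            apply cnt_congr
            intro j hj
            have hji : j ≠ i := (Finset.mem_erase.mp hj).1
            by_cases hjS : j ∈ S <;> simp [hjS, Finset.mem_insert, hji]
          rw [ecg] at e
          have hIH := hq x
          by_cases hpx : Φ i = some x
          · obtain rfl : x₀ = x := Option.some_injective _ (hΦi.symm.trans hpx)
            rw [if_pos hpx] at e hIH
            omega
          · rw [if_neg hpx] at e hIH
            omega


lemma feasible_iff_cnt {m n : ℕ} (s : Fin m → ℕ) (Φ : Fin n → Option (Fin m)) :
    feasible s Φ ↔ ∀ x, cnt Finset.univ Φ x ≤ s x := Iff.rfl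

lemma exists_opt {m n : ℕ} (α : Fin m → ℕ) (pos : Fin n → Fin m ≃ Fin m)
    (N' : Finset (Fin n)) (s : Fin m → ℕ) :
    ∃ Φ, feasible s Φ ∧ satisf α pos N' Φ = zval α pos N' s := by
  have hne : (Finset.univ.filter (fun Φ : Fin n → Option (Fin m) => feasible s Φ)).Nonempty := by
    refine ⟨fun _ => none, Finset.mem_filter.mpr ⟨Finset.mem_univ _, fun a => ?_⟩⟩
    simp
  obtain ⟨Φ, hΦ, hval⟩ := Finset.exists_mem_eq_sup _ hne (satisf α pos N')
  exact ⟨Φ, (Finset.mem_filter.mp hΦ).2, hval.symm⟩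

lemma le_zval {m n : ℕ} (α : Fin m → ℕ) (pos : Fin n → Fin m ≃ Fin m)
    (N' : Finset (Fin n)) {s : Fin m → ℕ} {Φ : Fin n → Option (Fin m)}
    (h : feasible s Φ) : satisf α pos N' Φ ≤ zval α pos N' s :=
  Finset.le_sup (Finset.mem_filter.mpr ⟨Finset.mem_univ _, h⟩)

lemma satisf_swap_add {m n : ℕ} (α : Fin m → ℕ) (pos : Fin n → Fin m ≃ Fin m)
    (S : Finset (Fin n)) (Φ Ψ : Fin n → Option (Fin m)) :
    satisf α pos Finset.univ (fun i => if i ∈ S then Ψ i else Φ i) +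
      satisf α pos Finset.univ (fun i => if i ∈ S then Φ i else Ψ i) =
    satisf α pos Finset.univ Φ + satisf α pos Finset.univ Ψ := by
  unfold satisf
  rw [← Finset.sum_add_distrib, ← Finset.sum_add_distrib]
  apply Finset.sum_congr rfl
  intro i _
  by_cases h : i ∈ S <;> simp [h, Nat.add_comm]

end ZSubAux


open ZSubAux in
/-- The optimal-satisfaction function `z_N` is submodular over
capacity functions: if s ≤ t pointwise then
z_N(s ∪ {a}) + z_N(t) ≥ z_N(t ∪ {a}) + z_N(s). -/
theorem zcap_submodular
    {m n : ℕ}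
    (α : Fin m → ℕ) (hα0 : ∀ i : Fin m, (i : ℕ) + 1 = m → α i = 0)
    (hαmono : ∀ i j : Fin m, i ≤ j → α j ≤ α i)
    (pos : Fin n → Fin m ≃ Fin m)
    (s t : Fin m → ℕ) (hst : ∀ a' : Fin m, s a' ≤ t a') (a : Fin m) :
    zval α pos Finset.univ (Function.update t a (t a + 1)) +
        zval α pos Finset.univ s ≤
      zval α pos Finset.univ (Function.update s a (s a + 1)) +
        zval α pos Finset.univ t := by
  obtain ⟨Φ, hΦf, hΦv⟩ := exists_opt α pos Finset.univ (Function.update t a (t a + 1))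
  obtain ⟨Ψ, hΨf, hΨv⟩ := exists_opt α pos Finset.univ s
  rw [feasible_iff_cnt] at hΦf hΨf
  obtain ⟨S, -, hp, hq⟩ := key Φ Ψ Finset.univ (Function.update s a (s a + 1)) t
    (by
      intro x
      have hs := hΨf x
      have ht := hst x
      rcases eq_or_ne x a with rfl | hx
      · simp only [Function.update_self]; omega
      · simp only [Function.update_of_ne hx]; omega)
    (fun x => le_trans (hΨf x) (hst x))
    (by
      intro x
      have h1 := hΦf x
      have h2 := hΨf x
      rcases eq_or_ne x a with rfl | hx
      · simp only [Function.update_self] at h1 ⊢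
        omega
      · simp only [Function.update_of_ne hx] at h1 ⊢
        omega)
  have hfeas1 : feasible (Function.update s a (s a + 1))
      (fun i => if i ∈ S then Ψ i else Φ i) := (feasible_iff_cnt _ _).mpr hp
  have hfeas2 : feasible t (fun i => if i ∈ S then Φ i else Ψ i) := (feasible_iff_cnt _ _).mpr hq
  have hkey := satisf_swap_add α pos S Φ Ψ
  have b1 := le_zval α pos Finset.univ hfeas1
  have b2 := le_zval α pos Finset.univ hfeas2
  omega
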